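/- arXiv:1005.0815 — 2 statements merged into one kernel-verified Lean document; each statement's English description precedes it below -/
import Mathlib

section
/- Let a > 0 and k ≥ 0 be real numbers, and define F : (0,∞) → ℝ by F(z) = 2∫₀ᶻ √(1 − (a/(a + t^{2+k}))²) dt. Then lim_{z→0⁺} F(z)/z^{2+k/2} = 4√(2a)/(a(4 + k)). -/
open Real

private lemma busemann_aux_point (a : ℝ) (ha : 0 < a) (p : ℝ) {t : ℝ} (ht : 0 ≤ t) :
    Real.sqrt (1 - (a / (a + t ^ p)) ^ 2)
      = t ^ (p/2) * Real.sqrt (2*a + t^p) / (a + t^p) := by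
  have hs : 0 ≤ t ^ p := Real.rpow_nonneg ht p
  have hd : 0 < a + t ^ p := by linarith
  have h1 : 1 - (a/(a+t^p))^2 = (t^p*(2*a+t^p))/(a+t^p)^2 := by
    field_simp; ring
  rw [h1, Real.sqrt_div (by positivity), Real.sqrt_sq hd.le,
    Real.sqrt_mul hs, Real.sqrt_eq_rpow (t^p), ← Real.rpow_mul ht]
  ring_nf

/-- Let `a > 0` and `k ≥ 0` be real numbers and define
`F z = 2 * ∫ t in 0..z, √(1 - (a / (a + t^(2+k)))^2)`. Then
`F z / z^(2 + k/2) → 4√(2a) / (a(4+k))` as `z → 0⁺`. -/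
theorem busemann_model_asymptotics (a k : ℝ) (ha : 0 < a) (hk : 0 ≤ k)
    (F : ℝ → ℝ)
    (hF : ∀ z : ℝ, 0 < z →
      F z = 2 * ∫ t in (0 : ℝ)..z, Real.sqrt (1 - (a / (a + t ^ (2 + k))) ^ 2)) :
    Filter.Tendsto (fun z : ℝ => F z / z ^ (2 + k / 2))
      (nhdsWithin 0 (Set.Ioi 0))
      (nhds (4 * Real.sqrt (2 * a) / (a * (4 + k)))) := by
  set p : ℝ := 2 + k with hpdef
  have hp : 0 < p := by positivity
  set q : ℝ := 2 + k / 2 with hqdef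
  have hq : 0 < q := by positivity
  have hq' : q = p / 2 + 1 := by rw [hqdef, hpdef]; ring
  -- bounds for F z / z ^ q for z > 0
  have key : ∀ z : ℝ, 0 < z →
      2 * Real.sqrt (2*a) / ((a + z ^ p) * q) ≤ F z / z ^ q ∧
      F z / z ^ q ≤ 2 * Real.sqrt (2*a + z ^ p) / (a * q) := by
    intro z hz
    have hzp : 0 ≤ z ^ p := Real.rpow_nonneg hz.le p
    have hicc : Set.uIcc (0:ℝ) z = Set.Icc 0 z := Set.uIcc_of_le hz.le
    -- integrability
    have hden : ∀ x ∈ Set.Icc (0:ℝ) z, a + x ^ p ≠ 0 := by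
      intro x hx
      have : 0 ≤ x ^ p := Real.rpow_nonneg hx.1 p
      positivity
    have hco : ContinuousOn (fun t : ℝ => Real.sqrt (1 - (a/(a+t^p))^2))
        (Set.uIcc 0 z) := by
      rw [hicc]
      apply ContinuousOn.sqrt
      apply continuousOn_const.sub
      apply ContinuousOn.pow
      exact continuousOn_const.div
        (continuousOn_const.add (continuousOn_id.rpow_const
          (fun x _ => Or.inr hp.le))) hden
    have hInt : IntervalIntegrable
        (fun t : ℝ => Real.sqrt (1 - (a/(a+t^p))^2)) MeasureTheory.volume 0 z :=
      hco.intervalIntegrable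
    have hIntPow : IntervalIntegrable (fun t : ℝ => t ^ (p/2))
        MeasureTheory.volume 0 z := intervalIntegral.intervalIntegrable_rpow' (by linarith)
    have hPowVal : (∫ t in (0:ℝ)..z, t ^ (p/2)) = z ^ q / q := by
      rw [integral_rpow (Or.inl (by linarith)), Real.zero_rpow (by linarith), hq']
      ring
    have hPowNonneg : ∀ t ∈ Set.Icc (0:ℝ) z, (0:ℝ) ≤ t ^ (p/2) :=
      fun t ht => Real.rpow_nonneg ht.1 _
    -- lower bound on the integral
    have hlb : Real.sqrt (2*a) / (a + z ^ p) * (z ^ q / q)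
        ≤ ∫ t in (0:ℝ)..z, Real.sqrt (1 - (a/(a+t^p))^2) := by
      have := intervalIntegral.integral_mono_on hz.le (hIntPow.const_mul
        (Real.sqrt (2*a) / (a + z ^ p))) hInt (fun t ht => by
          rw [busemann_aux_point a ha p ht.1]
          have htp : 0 ≤ t ^ p := Real.rpow_nonneg ht.1 p
          have h2 : t ^ p ≤ z ^ p := Real.rpow_le_rpow ht.1 ht.2 hp.le
          rw [mul_comm, mul_div_assoc]
          apply mul_le_mul_of_nonneg_left _ (hPowNonneg t ht)
          apply div_le_div₀ (Real.sqrt_nonneg _)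
            (Real.sqrt_le_sqrt (by linarith)) (by linarith) (by linarith))
      rwa [intervalIntegral.integral_const_mul, hPowVal] at this
    -- upper bound on the integral
    have hub : (∫ t in (0:ℝ)..z, Real.sqrt (1 - (a/(a+t^p))^2))
        ≤ Real.sqrt (2*a + z ^ p) / a * (z ^ q / q) := by
      have := intervalIntegral.integral_mono_on hz.le hInt
        (hIntPow.const_mul (Real.sqrt (2*a + z ^ p) / a)) (fun t ht => by
          rw [busemann_aux_point a ha p ht.1]
          have htp : 0 ≤ t ^ p := Real.rpow_nonneg ht.1 p
          have h2 : t ^ p ≤ z ^ p := Real.rpow_le_rpow ht.1 ht.2 hp.le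
          rw [mul_comm (Real.sqrt (2*a + z ^ p) / a), mul_div_assoc]
          apply mul_le_mul_of_nonneg_left _ (hPowNonneg t ht)
          apply div_le_div₀ (by positivity)
            (Real.sqrt_le_sqrt (by linarith)) ha (by linarith))
      rwa [intervalIntegral.integral_const_mul, hPowVal] at this
    have hzq : 0 < z ^ q := Real.rpow_pos_of_pos hz q
    constructor
    · have heq : 2 * Real.sqrt (2*a) / ((a + z ^ p) * q)
          = 2 * (Real.sqrt (2*a) / (a + z ^ p) * (z ^ q / q)) / z ^ q := by
        field_simp
      rw [heq, hF z hz]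
      gcongr
    · have heq : 2 * Real.sqrt (2*a + z ^ p) / (a * q)
          = 2 * (Real.sqrt (2*a + z ^ p) / a * (z ^ q / q)) / z ^ q := by
        field_simp
      rw [heq, hF z hz]
      gcongr
  -- limit of z ^ p as z → 0⁺
  have hzp0 : Filter.Tendsto (fun z : ℝ => z ^ p) (nhdsWithin 0 (Set.Ioi 0))
      (nhds 0) := by
    have h : ContinuousWithinAt (fun z : ℝ => z ^ p) (Set.Ioi 0) 0 :=
      (Real.continuousAt_rpow_const 0 p (Or.inr hp.le)).continuousWithinAt
    simpa [Real.zero_rpow hp.ne'] using h.tendsto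
  -- limits of the bounding functions
  have hval : 4 * Real.sqrt (2 * a) / (a * (4 + k))
      = 2 * Real.sqrt (2*a) / ((a + 0) * q) := by
    rw [hqdef, div_eq_div_iff (by positivity) (by positivity)]
    ring
  have hlow : Filter.Tendsto (fun z : ℝ => 2 * Real.sqrt (2*a) / ((a + z ^ p) * q))
      (nhdsWithin 0 (Set.Ioi 0)) (nhds (4 * Real.sqrt (2 * a) / (a * (4 + k)))) := by
    rw [hval]
    have hc : ContinuousAt (fun c : ℝ => 2 * Real.sqrt (2*a) / ((a + c) * q)) 0 := by
      apply ContinuousAt.div continuousAt_const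
      · exact ((continuousAt_const.add continuousAt_id).mul continuousAt_const)
      · show (a + (0:ℝ)) * q ≠ 0; positivity
    exact hc.tendsto.comp hzp0
  have hupval : 2 * Real.sqrt (2*a) / ((a + 0) * q)
      = 2 * Real.sqrt (2*a + 0) / (a * q) := by norm_num
  have hhigh : Filter.Tendsto (fun z : ℝ => 2 * Real.sqrt (2*a + z ^ p) / (a * q))
      (nhdsWithin 0 (Set.Ioi 0)) (nhds (4 * Real.sqrt (2 * a) / (a * (4 + k)))) := by
    rw [hval, hupval]
    have hc : ContinuousAt (fun c : ℝ => 2 * Real.sqrt (2*a + c) / (a * q)) 0 := by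
      apply ContinuousAt.div
      · exact continuousAt_const.mul
          ((continuousAt_const.add continuousAt_id).sqrt)
      · exact continuousAt_const
      · show a * q ≠ 0; positivity
    exact hc.tendsto.comp hzp0
  refine tendsto_of_tendsto_of_tendsto_of_le_of_le' hlow hhigh ?_ ?_
  · filter_upwards [self_mem_nhdsWithin] with z hz
    exact (key z hz).1
  · filter_upwards [self_mem_nhdsWithin] with z hz
    exact (key z hz).2
end

section
/- Let a > 0 and k ≥ 0 be real numbers, set C = 4√(2a)/(a(4 + k)), and define F : (0,∞) → ℝ by F(z) = 2∫₀ᶻ √(1 − (a/(a + t^{2+k}))²) dt. Then F(z) = C·z^{2+k/2} + o(z^{3+k/2}) as z → 0⁺; that is, (F(z) − C·z^{2+k/2})/z^{3+k/2} → 0 as z → 0⁺. -/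
open Real Filter Topology

/-! Substituting `s = t ^ (2 + k)`, the integrand is `√s * (√(2a + s) / (a + s))`, and
`√(2a + s) / (a + s)` lies within `√(2a) / a * (s / a)` of its value `√(2a) / a` at `s = 0`.
So the integrand is `√(2a) / a * t ^ (1 + k/2)` up to an error `O(t ^ (3 + 3k/2))`; integrating,
`F z = C * z ^ (2 + k/2) + O(z ^ (4 + 3k/2))`, and `4 + 3k/2 > 3 + k/2`. -/

theorem sqrt_one_sub_div_add_sq {a s : ℝ} (ha : 0 < a) (hs : 0 ≤ s) :
    √(1 - (a / (a + s)) ^ 2) = √s * (√(2 * a + s) / (a + s)) := by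
  have hpos : 0 < a + s := by positivity
  have hrad : 1 - (a / (a + s)) ^ 2 = s * (2 * a + s) / (a + s) ^ 2 := by
    field_simp; ring
  rw [hrad, sqrt_div' _ (sq_nonneg _), sqrt_sq hpos.le, sqrt_mul hs, mul_div_assoc]

theorem abs_sqrt_two_mul_add_div_sub_le {a s : ℝ} (ha : 0 < a) (hs : 0 ≤ s) :
    |√(2 * a + s) / (a + s) - √(2 * a) / a| ≤ √(2 * a) / a * (s / a) := by
  have hpos : 0 < a + s := by positivity
  rw [abs_sub_le_iff]
  constructor
  · have hcross : √(2 * a + s) * a ≤ √(2 * a) * (a + s) := by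
      have e1 : √(2 * a + s) * a = √((2 * a + s) * a ^ 2) := by
        rw [sqrt_mul' _ (sq_nonneg a), sqrt_sq ha.le]
      have e2 : √(2 * a) * (a + s) = √(2 * a * (a + s) ^ 2) := by
        rw [sqrt_mul' _ (sq_nonneg _), sqrt_sq hpos.le]
      rw [e1, e2]
      exact sqrt_le_sqrt (by nlinarith [mul_nonneg ha.le hs, mul_nonneg (mul_nonneg ha.le hs) hs])
    exact (sub_nonpos.2 ((div_le_div_iff₀ hpos ha).2 hcross)).trans (by positivity)
  · calc √(2 * a) / a - √(2 * a + s) / (a + s)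
        ≤ √(2 * a) / a - √(2 * a) / (a + s) := by
          gcongr; linarith
      _ = √(2 * a) / a * (s / (a + s)) := by field_simp; ring
      _ ≤ √(2 * a) / a * (s / a) := by gcongr; linarith

theorem abs_sqrt_one_sub_div_add_rpow_sub_le {a k t : ℝ} (ha : 0 < a) (ht : 0 < t) :
    |√(1 - (a / (a + t ^ (2 + k))) ^ 2) - √(2 * a) / a * t ^ (1 + k / 2)|
      ≤ √(2 * a) / a / a * t ^ (3 + 3 * k / 2) := by
  have hs : 0 ≤ t ^ (2 + k) := by positivity
  have hsqrt : √(t ^ (2 + k)) = t ^ (1 + k / 2) := by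
    rw [sqrt_eq_rpow, ← rpow_mul ht.le]; ring_nf
  have hsplit : t ^ (3 + 3 * k / 2) = t ^ (1 + k / 2) * t ^ (2 + k) := by
    rw [← rpow_add ht]; ring_nf
  rw [sqrt_one_sub_div_add_sq ha hs, hsqrt, mul_comm (√(2 * a) / a), ← mul_sub, abs_mul,
    abs_of_pos (by positivity), hsplit]
  calc t ^ (1 + k / 2) * |√(2 * a + t ^ (2 + k)) / (a + t ^ (2 + k)) - √(2 * a) / a|
      ≤ t ^ (1 + k / 2) * (√(2 * a) / a * (t ^ (2 + k) / a)) := by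
        gcongr; exact abs_sqrt_two_mul_add_div_sub_le ha hs
    _ = √(2 * a) / a / a * (t ^ (1 + k / 2) * t ^ (2 + k)) := by ring

theorem abs_integral_sub_le_of_abs_sub_rpow_le {g : ℝ → ℝ} {c M p q z : ℝ} (hp : -1 < p)
    (hq : -1 < q) (hz : 0 ≤ z) (hg : IntervalIntegrable g MeasureTheory.volume 0 z)
    (hbound : ∀ t ∈ Set.Ioc 0 z, |g t - c * t ^ p| ≤ M * t ^ q) :
    |(∫ t in (0 : ℝ)..z, g t) - c * (z ^ (p + 1) / (p + 1))|
      ≤ M * (z ^ (q + 1) / (q + 1)) := by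
  have hpow_integral : ∀ r : ℝ, -1 < r → ∀ b : ℝ,
      ∫ t in (0 : ℝ)..z, b * t ^ r = b * (z ^ (r + 1) / (r + 1)) := fun r hr b => by
      rw [intervalIntegral.integral_const_mul, integral_rpow (.inl hr),
        zero_rpow (by linarith), sub_zero]
  rw [← hpow_integral p hp, ← hpow_integral q hq, ← intervalIntegral.integral_sub hg
    ((intervalIntegral.intervalIntegrable_rpow' hp).const_mul c)]
  exact intervalIntegral.norm_integral_le_of_norm_le (f := fun t => g t - c * t ^ p) hz
    (.of_forall hbound) ((intervalIntegral.intervalIntegrable_rpow' hq).const_mul M)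

theorem tendsto_div_rpow_nhdsGT_zero_of_abs_le {f : ℝ → ℝ} {K p q : ℝ} (hpq : p < q)
    (hf : ∀ z, 0 < z → |f z| ≤ K * z ^ q) :
    Tendsto (fun z => f z / z ^ p) (𝓝[>] 0) (𝓝 0) := by
  have hlim : Tendsto (fun z : ℝ => K * z ^ (q - p)) (𝓝[>] 0) (𝓝 0) := by
    have := ((continuous_rpow_const (sub_pos.2 hpq).le).tendsto 0).const_mul K
    rw [zero_rpow (sub_pos.2 hpq).ne', mul_zero] at this
    exact this.mono_left nhdsWithin_le_nhds
  refine squeeze_zero_norm' ?_ hlim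
  filter_upwards [self_mem_nhdsWithin] with z (hz : 0 < z)
  rw [norm_div, norm_of_nonneg (rpow_pos_of_pos hz p).le, div_le_iff₀ (rpow_pos_of_pos hz p),
    mul_assoc, ← rpow_add hz, sub_add_cancel]
  exact hf z hz

/-- Let `a > 0` and `k ≥ 0` be real numbers, set
`C = 4√(2a) / (a(4+k))`, and define `F z = 2 * ∫ t in 0..z, √(1 - (a / (a + t^(2+k)))^2)`.
Then `F z = C * z^(2+k/2) + o(z^(3+k/2))` as `z → 0⁺`, i.e.
`(F z - C * z^(2+k/2)) / z^(3+k/2) → 0` as `z → 0⁺`. -/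
theorem busemann_model_expansion (a k : ℝ) (ha : 0 < a) (hk : 0 ≤ k)
    (C : ℝ) (hC : C = 4 * Real.sqrt (2 * a) / (a * (4 + k)))
    (F : ℝ → ℝ)
    (hF : ∀ z : ℝ, 0 < z →
      F z = 2 * ∫ t in (0 : ℝ)..z, Real.sqrt (1 - (a / (a + t ^ (2 + k))) ^ 2)) :
    Filter.Tendsto (fun z : ℝ => (F z - C * z ^ (2 + k / 2)) / z ^ (3 + k / 2))
      (nhdsWithin 0 (Set.Ioi 0)) (nhds 0) := by
  set L := √(2 * a) / a with hL
  refine tendsto_div_rpow_nhdsGT_zero_of_abs_le (K := 2 * (L / a) / (4 + 3 * k / 2))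
    (q := 4 + 3 * k / 2) (by linarith) fun z hz => ?_
  have hcont : ContinuousOn (fun t => √(1 - (a / (a + t ^ (2 + k))) ^ 2)) (Set.uIcc 0 z) := by
    refine ContinuousOn.sqrt (continuousOn_const.sub
      ((continuousOn_const.div (continuousOn_const.add ?_) fun t ht => ?_).pow 2))
    · exact (continuous_rpow_const (by linarith)).continuousOn
    · rw [Set.uIcc_of_le hz.le] at ht
      exact (add_pos_of_pos_of_nonneg ha (rpow_nonneg ht.1 _)).ne'
  have hI := abs_integral_sub_le_of_abs_sub_rpow_le (c := L) (M := L / a) (p := 1 + k / 2)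
    (q := 3 + 3 * k / 2) (by linarith) (by linarith) hz.le hcont.intervalIntegrable
    fun t ht => abs_sqrt_one_sub_div_add_rpow_sub_le ha ht.1
  have hCL : C = 2 * L / (2 + k / 2) := by
    rw [hC, hL]; field_simp; ring
  rw [show (1 : ℝ) + k / 2 + 1 = 2 + k / 2 by ring,
    show (3 : ℝ) + 3 * k / 2 + 1 = 4 + 3 * k / 2 by ring] at hI
  rw [hF z hz, hCL, show ∀ I : ℝ, 2 * I - 2 * L / (2 + k / 2) * z ^ (2 + k / 2)
    = 2 * (I - L * (z ^ (2 + k / 2) / (2 + k / 2))) from fun I => by ring, abs_mul, abs_two]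
  linear_combination 2 * hI
end
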